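/- Let K be a closed convex cone with lineality space U = K ∩ (−K), and set K̂ = K ∩ U^⊥. Then the map F ↦ F + U is a bijection between the set of faces of K̂ and the set of faces of K, and this bijection preserves polyhedrality: F is polyhedral if and only if F + U is polyhedral. -/

import Mathlib

/-!
Write `P` for the orthogonal projection onto `U^⊥`. Since `U ⊆ K` and `K + K ⊆ K`, we have
`K + U = K`, so `P` maps `K` into `K̂`, and every nonempty face of `K` is invariant under
translation by `U`. Hence `G ↦ G ∩ U^⊥` inverts `F ↦ F + U`, and `P(x + y) = P x + P y` transfers
the face property. For polyhedrality, `F + U = P⁻¹(F)` and `F = (F + U) ∩ U^⊥`; preimages under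
linear maps and finite intersections of polyhedral cones are polyhedral, and so is `U^⊥`, being cut
out by `⟪±v, x⟫ ≥ 0` for `v` in a finite spanning set of `U`.
-/

open Pointwise

/-- A closed convex cone as a set. -/
def IsClosedConvexCone {m : ℕ} (K : Set (EuclideanSpace ℝ (Fin m))) : Prop :=
  IsClosed K ∧ Convex ℝ K ∧ ∀ x ∈ K, ∀ t : ℝ, 0 ≤ t → t • x ∈ K

/-- A face of a convex cone. -/
def IsFace {m : ℕ} (K F : Set (EuclideanSpace ℝ (Fin m))) : Prop :=
  F ⊆ K ∧ Convex ℝ F ∧ (∀ x ∈ F, ∀ t : ℝ, 0 ≤ t → t • x ∈ F) ∧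
    ∀ x ∈ K, ∀ y ∈ K, x + y ∈ F → x ∈ F ∧ y ∈ F

/-- A polyhedral cone: a finite intersection of closed half-spaces. -/
def IsPolyhedralCone {m : ℕ} (K : Set (EuclideanSpace ℝ (Fin m))) : Prop :=
  ∃ s : Finset (EuclideanSpace ℝ (Fin m)), K = {x | ∀ v ∈ s, 0 ≤ (inner ℝ v x : ℝ)}

section ConvexCone

variable {E : Type*} [AddCommGroup E] [Module ℝ E]

theorem Convex.add_mem_of_smul_mem {K : Set E} (hconv : Convex ℝ K)
    (hsmul : ∀ x ∈ K, ∀ t : ℝ, 0 ≤ t → t • x ∈ K) {x y : E} (hx : x ∈ K) (hy : y ∈ K) :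
    x + y ∈ K := by
  have hmid : (1 / 2 : ℝ) • x + (1 / 2 : ℝ) • y ∈ K :=
    hconv hx hy (by norm_num) (by norm_num) (by norm_num)
  simpa [smul_add, smul_smul] using hsmul _ hmid 2 (by norm_num)

def PointedCone.ofConvex (K : Set E) (hne : K.Nonempty) (hconv : Convex ℝ K)
    (hsmul : ∀ x ∈ K, ∀ t : ℝ, 0 ≤ t → t • x ∈ K) : PointedCone ℝ E where
  carrier := K
  add_mem' := hconv.add_mem_of_smul_mem hsmul
  zero_mem' := by
    obtain ⟨x, hx⟩ := hne
    simpa using hsmul x hx 0 le_rfl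
  smul_mem' c _ hx := hsmul _ hx c c.2

theorem PointedCone.coe_lineal_ofConvex (K : Set E) (hne : K.Nonempty) (hconv : Convex ℝ K)
    (hsmul : ∀ x ∈ K, ∀ t : ℝ, 0 ≤ t → t • x ∈ K) :
    ((PointedCone.ofConvex K hne hconv hsmul).lineal : Set E) = K ∩ -K := by
  ext x
  simp [PointedCone.ofConvex]

end ConvexCone

section OrthogonalDecomposition

variable {E : Type*} [NormedAddCommGroup E] [InnerProductSpace ℝ E] (L : Submodule ℝ E)

theorem add_submodule_inter_orthogonal_eq {F : Set E} (hF : F ⊆ Lᗮ) : (F + L) ∩ Lᗮ = F := by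
  refine Set.Subset.antisymm ?_ fun x hx => ⟨⟨x, hx, 0, L.zero_mem, add_zero x⟩, hF hx⟩
  rintro x ⟨hx, hxL⟩
  obtain ⟨f, hf, u, hu, rfl⟩ := Set.mem_add.mp hx
  have hu' : u ∈ Lᗮ := by simpa using Lᗮ.sub_mem hxL (hF hf)
  rwa [Submodule.disjoint_def.mp L.orthogonal_disjoint u hu hu', add_zero]

theorem mem_orthogonal_span_iff {t : Set E} {x : E} :
    x ∈ (Submodule.span ℝ t)ᗮ ↔ ∀ v ∈ t, inner ℝ v x = (0 : ℝ) := by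
  rw [← Submodule.span_singleton_le_iff_mem, ← Submodule.IsOrtho, Submodule.isOrtho_span]
  simp [real_inner_comm]

variable [L.HasOrthogonalProjection]

theorem mem_add_submodule_iff {F : Set E} (hF : F ⊆ Lᗮ) {x : E} :
    x ∈ F + L ↔ Lᗮ.starProjection x ∈ F := by
  constructor
  · intro hx
    obtain ⟨f, hf, u, hu, rfl⟩ := Set.mem_add.mp hx
    rwa [Submodule.eq_starProjection_of_mem_orthogonal' (hF hf) (L.le_orthogonal_orthogonal hu) rfl]
  · intro hx
    exact Set.mem_add.mpr ⟨_, hx, _, L.starProjection_apply_mem x,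
      by rw [add_comm, Submodule.starProjection_add_starProjection_orthogonal]⟩

theorem starProjection_orthogonal_mem {K : Set E} (hadd : ∀ x ∈ K, ∀ y ∈ K, x + y ∈ K)
    (hL : (L : Set E) ⊆ K) {x : E} (hx : x ∈ K) : Lᗮ.starProjection x ∈ K := by
  rw [Submodule.starProjection_orthogonal_val, sub_eq_add_neg]
  exact hadd _ hx _ (hL (L.neg_mem (L.starProjection_apply_mem x)))

theorem inter_orthogonal_add_submodule_eq {G : Set E} (hG : ∀ x ∈ G, ∀ u ∈ L, x + u ∈ G) :
    G ∩ Lᗮ + L = G := by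
  ext x
  rw [mem_add_submodule_iff L Set.inter_subset_right]
  refine ⟨fun hx => ?_, fun hx => ⟨?_, Lᗮ.starProjection_apply_mem x⟩⟩
  · simpa using hG _ hx.1 _ (L.starProjection_apply_mem x)
  · rw [Submodule.starProjection_orthogonal_val, sub_eq_add_neg]
    exact hG _ hx _ (L.neg_mem (L.starProjection_apply_mem x))

end OrthogonalDecomposition

section Faces

variable {m : ℕ} {K : Set (EuclideanSpace ℝ (Fin m))}
  (L : Submodule ℝ (EuclideanSpace ℝ (Fin m)))

theorem isFace_empty_iff {F : Set (EuclideanSpace ℝ (Fin m))} : IsFace ∅ F ↔ F = ∅ :=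
  ⟨fun h => Set.subset_empty_iff.mp h.1,
    by rintro rfl; exact ⟨le_rfl, convex_empty, by simp, by simp⟩⟩

theorem IsFace.add_mem_of_mem_submodule {G : Set (EuclideanSpace ℝ (Fin m))} (hG : IsFace K G)
    (hadd : ∀ x ∈ K, ∀ y ∈ K, x + y ∈ K) (hL : (L : Set _) ⊆ K) {x u : EuclideanSpace ℝ (Fin m)}
    (hx : x ∈ G) (hu : u ∈ L) : x + u ∈ G :=
  (hG.2.2.2 _ (hadd _ (hG.1 hx) _ (hL hu)) _ (hL (L.neg_mem hu)) (by simpa using hx)).1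

theorem IsFace.inter_orthogonal {G : Set (EuclideanSpace ℝ (Fin m))} (hG : IsFace K G) :
    IsFace (K ∩ Lᗮ) (G ∩ Lᗮ) := by
  obtain ⟨hGK, hconv, hsmul, hface⟩ := hG
  refine ⟨Set.inter_subset_inter_left _ hGK, hconv.inter Lᗮ.convex,
    fun x hx t ht => ⟨hsmul x hx.1 t ht, Lᗮ.smul_mem t hx.2⟩, ?_⟩
  intro x hx y hy hxy
  obtain ⟨hxG, hyG⟩ := hface x hx.1 y hy.1 hxy.1
  exact ⟨⟨hxG, hx.2⟩, hyG, hy.2⟩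

theorem IsFace.add_submodule {F : Set (EuclideanSpace ℝ (Fin m))} (hF : IsFace (K ∩ Lᗮ) F)
    (hadd : ∀ x ∈ K, ∀ y ∈ K, x + y ∈ K) (hL : (L : Set _) ⊆ K) : IsFace K (F + L) := by
  obtain ⟨hFK, hconv, hsmul, hface⟩ := hF
  have hFL : F ⊆ Lᗮ := hFK.trans Set.inter_subset_right
  have hproj : ∀ x ∈ K, Lᗮ.starProjection x ∈ K ∩ Lᗮ := fun x hx =>
    ⟨starProjection_orthogonal_mem L hadd hL hx, Lᗮ.starProjection_apply_mem x⟩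
  refine ⟨?_, hconv.add L.convex, ?_, ?_⟩
  · intro x hx
    obtain ⟨f, hf, u, hu, rfl⟩ := Set.mem_add.mp hx
    exact hadd _ (hFK hf).1 _ (hL hu)
  · intro x hx t ht
    obtain ⟨f, hf, u, hu, rfl⟩ := Set.mem_add.mp hx
    exact ⟨t • f, hsmul f hf t ht, t • u, L.smul_mem t hu, (smul_add t f u).symm⟩
  · intro x hx y hy hxy
    simp only [mem_add_submodule_iff L hFL, map_add] at hxy ⊢
    exact hface _ (hproj x hx) _ (hproj y hy) hxy

theorem bijOn_add_submodule_faces (hadd : ∀ x ∈ K, ∀ y ∈ K, x + y ∈ K) (hL : (L : Set _) ⊆ K) :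
    Set.BijOn (fun F : Set (EuclideanSpace ℝ (Fin m)) => F + (L : Set _))
      {F | IsFace (K ∩ Lᗮ) F} {G | IsFace K G} := by
  refine ⟨fun F hF => hF.add_submodule L hadd hL, fun F₁ hF₁ F₂ hF₂ h => ?_, fun G hG => ?_⟩
  · rw [← add_submodule_inter_orthogonal_eq L (hF₁.1.trans Set.inter_subset_right),
      ← add_submodule_inter_orthogonal_eq L (hF₂.1.trans Set.inter_subset_right)]
    exact congrArg (· ∩ _) h
  · exact ⟨G ∩ Lᗮ, hG.inter_orthogonal L, inter_orthogonal_add_submodule_eq L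
      fun _ hx _ hu => hG.add_mem_of_mem_submodule L hadd hL hx hu⟩

end Faces

section Polyhedral

theorem IsPolyhedralCone.preimage {m k : ℕ} {F : Set (EuclideanSpace ℝ (Fin k))}
    (hF : IsPolyhedralCone F) (A : EuclideanSpace ℝ (Fin m) →L[ℝ] EuclideanSpace ℝ (Fin k)) :
    IsPolyhedralCone (A ⁻¹' F) := by
  classical
  obtain ⟨s, rfl⟩ := hF
  refine ⟨s.image (ContinuousLinearMap.adjoint A), ?_⟩
  ext x
  simp [ContinuousLinearMap.adjoint_inner_left]

variable {m : ℕ}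

theorem IsPolyhedralCone.inter {F G : Set (EuclideanSpace ℝ (Fin m))} (hF : IsPolyhedralCone F)
    (hG : IsPolyhedralCone G) : IsPolyhedralCone (F ∩ G) := by
  classical
  obtain ⟨s, rfl⟩ := hF
  obtain ⟨t, rfl⟩ := hG
  refine ⟨s ∪ t, ?_⟩
  ext x
  simp [or_imp, forall_and]

theorem isPolyhedralCone_orthogonal (L : Submodule ℝ (EuclideanSpace ℝ (Fin m))) :
    IsPolyhedralCone (Lᗮ : Set (EuclideanSpace ℝ (Fin m))) := by
  classical
  obtain ⟨t, rfl⟩ := IsNoetherian.noetherian L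
  refine ⟨t ∪ t.image Neg.neg, ?_⟩
  ext x
  simp only [SetLike.mem_coe, mem_orthogonal_span_iff, Set.mem_ofPred_eq,
    Finset.mem_union, Finset.mem_image, or_imp, forall_and, forall_exists_index, and_imp,
    forall_apply_eq_imp_iff₂, inner_neg_left, neg_nonneg]
  exact ⟨fun h => ⟨fun v hv => (h v hv).ge, fun v hv => (h v hv).le⟩,
    fun h v hv => le_antisymm (h.2 v hv) (h.1 v hv)⟩

theorem isPolyhedralCone_add_submodule_iff (L : Submodule ℝ (EuclideanSpace ℝ (Fin m)))
    {F : Set (EuclideanSpace ℝ (Fin m))} (hF : F ⊆ Lᗮ) :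
    IsPolyhedralCone F ↔ IsPolyhedralCone (F + (L : Set _)) := by
  constructor
  · intro hpoly
    have hpreimage : F + L = Lᗮ.starProjection ⁻¹' F :=
      Set.ext fun x => mem_add_submodule_iff L hF
    exact hpreimage ▸ hpoly.preimage _
  · intro hpoly
    rw [← add_submodule_inter_orthogonal_eq L hF]
    exact hpoly.inter (isPolyhedralCone_orthogonal L)

end Polyhedral

/-- With `U = K ∩ (−K)` the lineality space and `K̂ = K ∩ U^⊥`, the map `F ↦ F + U`
is a bijection between faces of `K̂` and faces of `K` preserving polyhedrality. -/
theorem stmt9 {n : ℕ} (K U Khat : Set (EuclideanSpace ℝ (Fin n)))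
    (hK : IsClosedConvexCone K)
    (hU : U = K ∩ (-K))
    (hKhat : Khat = K ∩ {x | ∀ u ∈ U, (inner ℝ x u : ℝ) = 0}) :
    Set.BijOn (fun F => F + U) {F | IsFace Khat F} {G | IsFace K G} ∧
      ∀ F, IsFace Khat F → (IsPolyhedralCone F ↔ IsPolyhedralCone (F + U)) := by
  obtain ⟨-, hconv, hsmul⟩ := hK
  obtain rfl | hne := K.eq_empty_or_nonempty
  · rw [Set.empty_inter] at hU hKhat
    subst hU hKhat
    simp [isFace_empty_iff]
  set L := (PointedCone.ofConvex K hne hconv hsmul).lineal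
  have hUL : U = L := hU.trans (PointedCone.coe_lineal_ofConvex K hne hconv hsmul).symm
  have hKhatL : Khat = K ∩ Lᗮ := by
    rw [hKhat, hUL]
    ext x
    simp [Submodule.mem_orthogonal']
  have hLK : (L : Set _) ⊆ K := hUL ▸ hU ▸ Set.inter_subset_left
  subst hUL hKhatL
  exact ⟨bijOn_add_submodule_faces L (fun x hx y hy => hconv.add_mem_of_smul_mem hsmul hx hy) hLK,
    fun F hF => isPolyhedralCone_add_submodule_iff L (hF.1.trans Set.inter_subset_right)⟩
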